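/- There exist constants C > 0 and Z > 0 such that for all ζ̄ ≥ Z the inverse function t satisfies: |t(ζ̄) − (4/3)^{1/2}·ζ̄^{3/4}| ≤ C·ζ̄^{−1/4}; |t'(ζ̄) − (3/4)^{1/2}·ζ̄^{−1/4}| ≤ C·ζ̄^{−5/4}; |t''(ζ̄) + (1/4)·(3/4)^{1/2}·ζ̄^{−5/4}| ≤ C·ζ̄^{−9/4}; and |t'''(ζ̄) − (5/16)·(3/4)^{1/2}·ζ̄^{−9/4}| ≤ C·ζ̄^{−13/4}. -/

import Mathlib

/-!
For `u > 0` the value `t = t(u)` exceeds `1` and satisfies `(3/2) ∫₁ᵗ √(τ²−1) dτ = u^{3/2}`. Since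
that integral lies between `(t²−1)/2 − log t` and `(t²−1)/2`, both `t` and `√(t²−1)` agree with
`A = (4/3)^{1/2} u^{3/4}` up to a relative error `O(1/u)`. The inverse function theorem gives
`t' = √u / √(t²−1)`, and differentiating twice more yields `t⁽ᵏ⁾(u) = u^{3/4−k} Gₖ(t/A, √(t²−1)/A)`
for rational functions `Gₖ` that are smooth near `(1, 1)`. Hence
`t⁽ᵏ⁾(u) − u^{3/4−k} Gₖ(1, 1) = O(u^{−1/4−k})`, and the values `Gₖ(1, 1)` are the stated constants.
-/

open MeasureTheory Set

/-- The function `ζ : (−1,∞) → ℝ`, given by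
`ζ(t) = ((3/2)∫₁ᵗ √(τ²−1) dτ)^{2/3}` for `t ≥ 1` and
`ζ(t) = −((3/2)∫ₜ¹ √(1−τ²) dτ)^{2/3}` for `t < 1`. -/
noncomputable def zeta (t : ℝ) : ℝ :=
  if 1 ≤ t then ((3/2) * ∫ τ in (1:ℝ)..t, Real.sqrt (τ ^ 2 - 1)) ^ ((2:ℝ)/3)
  else -(((3/2) * ∫ τ in t..(1:ℝ), Real.sqrt (1 - τ ^ 2)) ^ ((2:ℝ)/3))

/-- `tf` is the inverse function `t(·) : (ζ(−1), ∞) → (−1, ∞)` of `ζ`. -/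
def IsZetaInv (tf : ℝ → ℝ) : Prop :=
  (∀ t : ℝ, -1 < t → tf (zeta t) = t) ∧
  (∀ u : ℝ, zeta (-1) < u → -1 < tf u ∧ zeta (tf u) = u)

open Real Filter Topology Asymptotics intervalIntegral

lemma sq_rpow_half {x : ℝ} (hx : 0 ≤ x) : (x ^ ((1:ℝ)/2)) ^ 2 = x := by
  rw [← rpow_natCast, ← rpow_mul hx]; norm_num

lemma abs_div_sub_one_le {x A : ℝ} (hx : 0 ≤ x) (hA : 0 < A) :
    |x / A - 1| ≤ |x ^ 2 - A ^ 2| / A ^ 2 := by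
  rw [div_sub_one hA.ne', abs_div, abs_of_pos hA, div_le_div_iff₀ hA (by positivity),
    show x ^ 2 - A ^ 2 = (x - A) * (x + A) by ring, abs_mul, abs_of_pos (by linarith : 0 < x + A)]
  nlinarith [mul_nonneg (abs_nonneg (x - A)) (mul_nonneg hx hA.le)]

lemma abs_div_sub_one_le_of_sq_bounds {s t A : ℝ} (hs : 1 ≤ s) (ht : 1 ≤ t) (hA : 0 < A)
    (hAs : A ^ 2 = 4 / 3 * s ^ 3) (hlow : A ^ 2 ≤ t ^ 2 - 1)
    (hupp : t ^ 2 - 1 ≤ A ^ 2 + 2 * log t) :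
    |t / A - 1| ≤ 7 / s ^ 2 ∧ |√(t ^ 2 - 1) / A - 1| ≤ 7 / s ^ 2 := by
  have hlog : log t ≤ 2 * √t := by
    have := log_le_sub_one_of_pos (sqrt_pos.2 (by linarith : 0 < t))
    rw [log_sqrt (by linarith)] at this
    linarith
  have htA : t ≤ A + 1 := by nlinarith [log_le_sub_one_of_pos (by linarith : 0 < t)]
  have hAs2 : A ≤ 2 * s ^ 2 := by nlinarith
  have hsqrt : √t ≤ 2 * s := sqrt_le_iff.2 ⟨by positivity, by nlinarith⟩
  have key : ∀ x, 0 ≤ x → |x ^ 2 - A ^ 2| ≤ 9 * s → |x / A - 1| ≤ 7 / s ^ 2 := fun x hx hxA =>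
    (abs_div_sub_one_le hx hA).trans <| by
      rw [div_le_div_iff₀ (by positivity) (by positivity)]
      nlinarith [mul_le_mul_of_nonneg_right hxA (sq_nonneg s)]
  refine ⟨key t (by linarith) (abs_le.2 ⟨by nlinarith, by nlinarith⟩),
    key _ (sqrt_nonneg _) ?_⟩
  rw [sq_sqrt (by nlinarith)]
  exact abs_le.2 ⟨by nlinarith, by nlinarith⟩

theorem DifferentiableAt.isBigO_comp_sub {𝕜 α E F F' : Type*} [NontriviallyNormedField 𝕜]
    [NormedAddCommGroup E] [NormedSpace 𝕜 E] [NormedAddCommGroup F] [NormedSpace 𝕜 F]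
    [NormedAddCommGroup F'] {G : E → F} {x₀ : E} (hG : DifferentiableAt 𝕜 G x₀) {l : Filter α}
    {P : α → E} {g : α → F'} (hP : (fun a => P a - x₀) =O[l] g) (hg : Tendsto g l (𝓝 0)) :
    (fun a => G (P a) - G x₀) =O[l] g := by
  have hPx₀ : Tendsto P l (𝓝 x₀) := by
    simpa using (hP.trans_tendsto hg).add_const x₀
  exact (hG.hasFDerivAt.isBigO_sub.comp_tendsto hPx₀).trans hP

lemma exists_forall_abs_le_rpow_of_isBigO {ι : Type*} [Finite ι] {f : ι → ℝ → ℝ} {p : ι → ℝ}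
    (h : ∀ i, f i =O[atTop] fun u => u ^ p i) :
    ∃ C > 0, ∃ Z > 0, ∀ u, Z ≤ u → ∀ i, |f i u| ≤ C * u ^ p i := by
  have hC : ∀ᶠ C in atTop, ∀ᶠ u in atTop, ∀ i, ‖f i u‖ ≤ C * ‖u ^ p i‖ := by
    filter_upwards [eventually_all.2 fun i => isBigO_iff_eventually.1 (h i)] with C hC
      using eventually_all.2 hC
  obtain ⟨C, hCu, hC0⟩ := (hC.and (eventually_gt_atTop 0)).exists
  obtain ⟨Z, hZ⟩ := eventually_atTop.1 (hCu.and (eventually_gt_atTop 0))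
  refine ⟨C, hC0, max Z 1, by positivity, fun u hu i => ?_⟩
  obtain ⟨hbound, hu0⟩ := hZ u (le_of_max_le_left hu)
  simpa [abs_of_pos (rpow_pos_of_pos hu0 (p i))] using hbound i

noncomputable def zetaIntegral (t : ℝ) : ℝ := ∫ τ in (1:ℝ)..t, √(τ ^ 2 - 1)

lemma continuous_sqrt_sq_sub_one : Continuous fun τ : ℝ => √(τ ^ 2 - 1) := by fun_prop

lemma hasStrictDerivAt_zetaIntegral (t : ℝ) : HasStrictDerivAt zetaIntegral √(t ^ 2 - 1) t :=
  integral_hasStrictDerivAt_right (continuous_sqrt_sq_sub_one.intervalIntegrable _ _)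
    (continuous_sqrt_sq_sub_one.stronglyMeasurableAtFilter _ _)
    continuous_sqrt_sq_sub_one.continuousAt

lemma zetaIntegral_nonneg {t : ℝ} (ht : 1 ≤ t) : 0 ≤ zetaIntegral t :=
  integral_nonneg ht fun _ _ => sqrt_nonneg _

lemma zetaIntegral_le {t : ℝ} (ht : 1 ≤ t) : zetaIntegral t ≤ (t ^ 2 - 1) / 2 := by
  have h : zetaIntegral t ≤ ∫ τ in (1:ℝ)..t, τ :=
    integral_mono_on ht (continuous_sqrt_sq_sub_one.intervalIntegrable _ _)
      (continuous_id.intervalIntegrable _ _) fun τ hτ =>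
        (sqrt_le_left (by linarith [hτ.1])).2 (by linarith)
  rw [integral_id] at h
  linarith

lemma le_zetaIntegral {t : ℝ} (ht : 1 ≤ t) : (t ^ 2 - 1) / 2 - log t ≤ zetaIntegral t := by
  have hinv : IntervalIntegrable (fun τ : ℝ => τ⁻¹) volume 1 t :=
    (continuousOn_inv₀.mono fun τ hτ => by
      rw [uIcc_of_le ht] at hτ; exact (zero_lt_one.trans_le hτ.1).ne').intervalIntegrable
  have h : ∫ τ in (1:ℝ)..t, (τ - τ⁻¹) ≤ zetaIntegral t := by
    refine integral_mono_on ht ((continuous_id.intervalIntegrable _ _).sub hinv)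
      (continuous_sqrt_sq_sub_one.intervalIntegrable _ _) fun τ hτ => ?_
    have hτ0 : 0 < τ := zero_lt_one.trans_le hτ.1
    -- `(τ - τ⁻¹)² = τ² - 2 + τ⁻² ≤ τ² - 1`
    refine le_sqrt_of_sq_le ?_
    have : τ⁻¹ ≤ 1 := inv_le_one_of_one_le₀ hτ.1
    have : τ * τ⁻¹ = 1 := mul_inv_cancel₀ hτ0.ne'
    nlinarith [inv_pos.2 hτ0]
  rw [integral_sub (f := fun τ => τ) (continuous_id.intervalIntegrable _ _) hinv, integral_id,
    integral_inv_of_pos one_pos (by linarith), div_one] at h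
  linarith

lemma zeta_of_one_le {t : ℝ} (ht : 1 ≤ t) : zeta t = ((3/2) * zetaIntegral t) ^ ((2:ℝ)/3) :=
  if_pos ht

lemma zeta_nonpos_of_lt_one {t : ℝ} (ht : t < 1) : zeta t ≤ 0 := by
  rw [zeta, if_neg ht.not_ge, neg_nonpos]
  exact rpow_nonneg (mul_nonneg (by norm_num) (integral_nonneg ht.le fun _ _ => sqrt_nonneg _)) _

lemma zeta_one : zeta 1 = 0 := by
  simp [zeta_of_one_le le_rfl, zetaIntegral]

lemma hasStrictDerivAt_zeta {t : ℝ} (ht : 1 < t) (hz : 0 < zeta t) :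
    HasStrictDerivAt zeta (√(t ^ 2 - 1) / √(zeta t)) t := by
  set X := (3/2) * zetaIntegral t
  have hX : 0 < X := by
    refine (mul_nonneg (by norm_num) (zetaIntegral_nonneg ht.le)).lt_of_ne fun h => ?_
    rw [zeta_of_one_le ht.le, ← h, zero_rpow (by norm_num)] at hz
    exact hz.false
  have hzX : √(zeta t) = X ^ ((1:ℝ)/3) := by
    rw [zeta_of_one_le ht.le, sqrt_eq_rpow, ← rpow_mul hX.le]; norm_num
  have hderiv := (hasStrictDerivAt_rpow_const_of_ne hX.ne' ((2:ℝ)/3)).comp t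
    ((hasStrictDerivAt_zetaIntegral t).const_mul (3/2))
  refine (hderiv.congr_deriv ?_).congr_of_eventuallyEq ?_
  · rw [hzX, show (2:ℝ)/3 - 1 = -(1/3) by norm_num, rpow_neg hX.le]
    field_simp
  · filter_upwards [eventually_ge_nhds ht] with s hs
    exact (zeta_of_one_le hs).symm

noncomputable def scaledPair (tf : ℝ → ℝ) (u : ℝ) : ℝ × ℝ :=
  (tf u / (((4:ℝ)/3) ^ ((1:ℝ)/2) * u ^ ((3:ℝ)/4)),
    √(tf u ^ 2 - 1) / (((4:ℝ)/3) ^ ((1:ℝ)/2) * u ^ ((3:ℝ)/4)))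

local notation "κ" => ((3:ℝ)/4) ^ ((1:ℝ)/2)

-- The `Gₖ` of the module docstring; note `κ = ((4/3)^{1/2})⁻¹`.
noncomputable def zetaInvProfile : Fin 4 → ℝ × ℝ → ℝ
  | 0, x => ((4:ℝ)/3) ^ ((1:ℝ)/2) * x.1
  | 1, x => κ / x.2
  | 2, x => κ / (2 * x.2) - κ ^ 3 * x.1 / x.2 ^ 4
  | 3, x => -κ / (4 * x.2) - 3 * κ ^ 3 * x.1 / (2 * x.2 ^ 4) - κ ^ 5 / x.2 ^ 5
      + 4 * κ ^ 5 * x.1 ^ 2 / x.2 ^ 7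

lemma differentiableAt_zetaInvProfile (k : Fin 4) :
    DifferentiableAt ℝ (zetaInvProfile k) (1, 1) := by
  match k with
  | 0 | 1 | 2 | 3 => unfold zetaInvProfile; fun_prop (disch := norm_num)

lemma zetaInvProfile_one_one :
    zetaInvProfile 0 (1, 1) = ((4:ℝ)/3) ^ ((1:ℝ)/2) ∧ zetaInvProfile 1 (1, 1) = κ ∧
    zetaInvProfile 2 (1, 1) = -(1/4 * κ) ∧ zetaInvProfile 3 (1, 1) = 5/16 * κ := by
  have hκ : κ ^ 2 = 3/4 := sq_rpow_half (by norm_num)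
  simp only [zetaInvProfile]
  refine ⟨by ring, by ring, ?_, ?_⟩
  · linear_combination -κ * hκ
  · linear_combination (3 * κ ^ 3 + 3/4 * κ) * hκ

namespace IsZetaInv

variable {tf : ℝ → ℝ} (htf : IsZetaInv tf)
include htf

lemma zeta_apply {u : ℝ} (hu : 0 < u) : zeta (tf u) = u :=
  (htf.2 u ((zeta_nonpos_of_lt_one (by norm_num)).trans_lt hu)).2

lemma one_lt {u : ℝ} (hu : 0 < u) : 1 < tf u := by
  have hz := htf.zeta_apply hu
  rcases lt_trichotomy (tf u) 1 with h | h | h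
  · linarith [zeta_nonpos_of_lt_one h]
  · rw [h, zeta_one] at hz; linarith
  · exact h

lemma three_halves_mul_zetaIntegral {u : ℝ} (hu : 0 < u) :
    (3/2) * zetaIntegral (tf u) = u ^ ((3:ℝ)/2) := by
  conv_rhs => rw [← htf.zeta_apply hu]
  rw [zeta_of_one_le (htf.one_lt hu).le, ← rpow_mul
    (mul_nonneg (by norm_num) (zetaIntegral_nonneg (htf.one_lt hu).le))]
  norm_num

lemma hasDerivAt {u : ℝ} (hu : 0 < u) : HasDerivAt tf (√u / √(tf u ^ 2 - 1)) u := by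
  have ht := htf.one_lt hu
  have hz := htf.zeta_apply hu
  have hleft : ∀ᶠ s in 𝓝 (tf u), tf (zeta s) = s := by
    filter_upwards [eventually_gt_nhds (by linarith : (-1:ℝ) < tf u)] with s hs using htf.1 s hs
  have hinv := (hasStrictDerivAt_zeta ht (hz.symm ▸ hu)).to_local_left_inverse
    (div_ne_zero (sqrt_ne_zero'.2 (by nlinarith)) (sqrt_ne_zero'.2 (hz.symm ▸ hu))) hleft
  rw [hz, inv_div] at hinv
  exact hinv.hasDerivAt

lemma hasDerivAt_sqrt_sq_sub_one {u : ℝ} (hu : 0 < u) :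
    HasDerivAt (fun v => √(tf v ^ 2 - 1)) (tf u * √u / √(tf u ^ 2 - 1) ^ 2) u := by
  have ht := htf.one_lt hu
  have hq : 0 < √(tf u ^ 2 - 1) := sqrt_pos.2 (by nlinarith)
  refine (((htf.hasDerivAt hu).fun_pow 2).sub_const 1).sqrt (by nlinarith) |>.congr_deriv ?_
  field_simp
  ring

lemma deriv_eqOn : EqOn (deriv tf) (fun u => √u / √(tf u ^ 2 - 1)) (Ioi 0) :=
  fun _ hu => (htf.hasDerivAt hu).deriv

lemma iteratedDeriv_two_eqOn :
    EqOn (iteratedDeriv 2 tf)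
      (fun u => 1 / (2 * √u * √(tf u ^ 2 - 1)) - u * tf u / √(tf u ^ 2 - 1) ^ 4) (Ioi 0) := by
  rw [iteratedDeriv_succ, iteratedDeriv_one]
  refine _root_.deriv_eqOn isOpen_Ioi fun u (hu : 0 < u) => ?_
  have hq : 0 < √(tf u ^ 2 - 1) := sqrt_pos.2 (by nlinarith [htf.one_lt hu])
  have hs : 0 < √u := sqrt_pos.2 hu
  refine ((hasDerivAt_sqrt hu.ne').fun_div (htf.hasDerivAt_sqrt_sq_sub_one hu) hq.ne')
    |>.congr_deriv ?_ |>.hasDerivWithinAt.congr (fun _ hv => htf.deriv_eqOn hv)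
      (htf.deriv_eqOn hu)
  have hus : u = √u ^ 2 := (sq_sqrt hu.le).symm
  generalize √u = s at *
  generalize tf u = t at *
  subst hus
  field_simp

lemma iteratedDeriv_three_eqOn :
    EqOn (iteratedDeriv 3 tf)
      (fun u => -1 / (4 * u * √u * √(tf u ^ 2 - 1)) - 3 * tf u / (2 * √(tf u ^ 2 - 1) ^ 4)
        - u * √u / √(tf u ^ 2 - 1) ^ 5 + 4 * u * √u * tf u ^ 2 / √(tf u ^ 2 - 1) ^ 7) (Ioi 0) := by
  rw [iteratedDeriv_succ]
  refine _root_.deriv_eqOn isOpen_Ioi fun u (hu : 0 < u) => ?_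
  have hq : 0 < √(tf u ^ 2 - 1) := sqrt_pos.2 (by nlinarith [htf.one_lt hu])
  have hs : 0 < √u := sqrt_pos.2 hu
  have hq' := htf.hasDerivAt_sqrt_sq_sub_one hu
  have hfirst := (hasDerivAt_const u (1:ℝ)).fun_div
    ((hasDerivAt_sqrt hu.ne').const_mul 2 |>.fun_mul hq') (by positivity)
  have hsecond := ((hasDerivAt_id u).fun_mul (htf.hasDerivAt hu)).fun_div (hq'.fun_pow 4)
    (by positivity)
  refine hfirst.sub hsecond |>.congr_deriv ?_ |>.hasDerivWithinAt.congr
    (fun _ hv => htf.iteratedDeriv_two_eqOn hv) (htf.iteratedDeriv_two_eqOn hu)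
  have hus : u = √u ^ 2 := (sq_sqrt hu.le).symm
  generalize √u = s at *
  generalize √(tf u ^ 2 - 1) = q at *
  generalize tf u = t at *
  subst hus
  simp only [id]
  field_simp
  ring

lemma iteratedDeriv_eq (k : Fin 4) {u : ℝ} (hu : 0 < u) :
    iteratedDeriv k tf u = u ^ ((3:ℝ)/4 - k) * zetaInvProfile k (scaledPair tf u) := by
  obtain ⟨w, hw, rfl⟩ : ∃ w, 0 < w ∧ u = w ^ 4 :=
    ⟨u ^ ((1:ℝ)/4), by positivity, by rw [← rpow_natCast, ← rpow_mul hu.le]; norm_num⟩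
  have h34 : (w ^ 4) ^ ((3:ℝ)/4) = w ^ 3 := by
    rw [← rpow_natCast, ← rpow_mul hw.le]; norm_num
  have hexp : (w ^ 4) ^ ((3:ℝ)/4 - k) = w ^ 3 / (w ^ 4) ^ (k : ℕ) := by
    rw [rpow_sub (by positivity), rpow_natCast, h34]
  have hsqrt : √(w ^ 4) = w ^ 2 := by
    rw [show w ^ 4 = (w ^ 2) ^ 2 by ring, sqrt_sq (by positivity)]
  have hκ : κ = (((4:ℝ)/3) ^ ((1:ℝ)/2))⁻¹ := by
    rw [← inv_rpow (by norm_num)]; norm_num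
  have hc0 : 0 < ((4:ℝ)/3) ^ ((1:ℝ)/2) := by positivity
  have hq : 0 < √(tf (w ^ 4) ^ 2 - 1) := sqrt_pos.2 (by nlinarith [htf.one_lt hu])
  rw [hexp]
  match k with
  | 0 | 1 | 2 | 3 =>
    simp only [zetaInvProfile, scaledPair, hκ, h34]
    norm_num [htf.deriv_eqOn hu, htf.iteratedDeriv_two_eqOn hu, htf.iteratedDeriv_three_eqOn hu,
      hsqrt]
    generalize ((4:ℝ)/3) ^ ((1:ℝ)/2) = c at *
    generalize √(tf (w ^ 4) ^ 2 - 1) = q at *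
    generalize tf (w ^ 4) = t
    field_simp

lemma abs_scaledPair_sub_one_le {u : ℝ} (hu : 1 ≤ u) :
    |(scaledPair tf u).1 - 1| ≤ 7 / u ∧ |(scaledPair tf u).2 - 1| ≤ 7 / u := by
  have hu0 : 0 < u := by linarith
  have hA : (((4:ℝ)/3) ^ ((1:ℝ)/2) * u ^ ((3:ℝ)/4)) ^ 2 = 4 / 3 * u ^ ((3:ℝ)/2) := by
    rw [mul_pow, ← rpow_natCast, ← rpow_natCast, ← rpow_mul (by norm_num), ← rpow_mul hu0.le]
    norm_num
  have hu32 : u ^ ((3:ℝ)/2) = √u ^ 3 := by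
    rw [sqrt_eq_rpow, ← rpow_natCast, ← rpow_mul hu0.le]; norm_num
  have hJ := htf.three_halves_mul_zetaIntegral hu0
  have ht := htf.one_lt hu0
  rw [show 7 / u = 7 / √u ^ 2 by rw [sq_sqrt hu0.le]]
  refine abs_div_sub_one_le_of_sq_bounds (one_le_sqrt.2 hu) ht.le (by positivity)
    (hu32 ▸ hA) ?_ ?_ <;> rw [hA]
  · linarith [zetaIntegral_le ht.le]
  · linarith [le_zetaIntegral ht.le]

lemma isBigO_scaledPair_sub : (fun u => scaledPair tf u - (1, 1)) =O[atTop] fun u => u⁻¹ := by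
  refine IsBigO.of_bound 7 ?_
  filter_upwards [eventually_ge_atTop 1] with u hu
  have h := htf.abs_scaledPair_sub_one_le hu
  rw [norm_inv, norm_of_nonneg (by linarith), ← div_eq_mul_inv]
  exact norm_prod_le_iff.2 ⟨h.1, h.2⟩

lemma isBigO_sub_rpow_mul {f : ℝ → ℝ} {G : ℝ × ℝ → ℝ} (hG : DifferentiableAt ℝ G (1, 1))
    {p : ℝ} (hf : ∀ u, 0 < u → f u = u ^ p * G (scaledPair tf u)) :
    (fun u => f u - u ^ p * G (1, 1)) =O[atTop] fun u => u ^ (p - 1) := by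
  refine ((isBigO_refl (fun u => u ^ p) atTop).mul
    (hG.isBigO_comp_sub htf.isBigO_scaledPair_sub tendsto_inv_atTop_zero)).congr' ?_ ?_
  · filter_upwards [eventually_gt_atTop 0] with u hu
    rw [hf u hu, mul_sub]
  · filter_upwards [eventually_gt_atTop 0] with u hu
    rw [rpow_sub_one hu.ne', div_eq_mul_inv]

lemma isBigO_iteratedDeriv_sub (k : Fin 4) :
    (fun u => iteratedDeriv k tf u - u ^ ((3:ℝ)/4 - k) * zetaInvProfile k (1, 1))
      =O[atTop] fun u => u ^ ((3:ℝ)/4 - k - 1) :=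
  htf.isBigO_sub_rpow_mul (differentiableAt_zetaInvProfile k) fun _ hu =>
    htf.iteratedDeriv_eq k hu

end IsZetaInv

/-- **Asymptotics of the inverse function `t(ζ̄)` and its first three derivatives as
`ζ̄ → +∞`.** -/
theorem t_asymptotics (tf : ℝ → ℝ) (htf : IsZetaInv tf) :
    ∃ C > (0:ℝ), ∃ Z > (0:ℝ), ∀ u : ℝ, Z ≤ u →
      |tf u - ((4:ℝ)/3) ^ ((1:ℝ)/2) * u ^ ((3:ℝ)/4)| ≤ C * u ^ (-(1:ℝ)/4) ∧
      |deriv tf u - ((3:ℝ)/4) ^ ((1:ℝ)/2) * u ^ (-(1:ℝ)/4)| ≤ C * u ^ (-(5:ℝ)/4) ∧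
      |iteratedDeriv 2 tf u + (1/4) * ((3:ℝ)/4) ^ ((1:ℝ)/2) * u ^ (-(5:ℝ)/4)| ≤
        C * u ^ (-(9:ℝ)/4) ∧
      |iteratedDeriv 3 tf u - (5/16) * ((3:ℝ)/4) ^ ((1:ℝ)/2) * u ^ (-(9:ℝ)/4)| ≤
        C * u ^ (-(13:ℝ)/4) := by
  obtain ⟨C, hC, Z, hZ, hbound⟩ :=
    exists_forall_abs_le_rpow_of_isBigO htf.isBigO_iteratedDeriv_sub
  refine ⟨C, hC, Z, hZ, fun u hu => ?_⟩
  obtain ⟨h0, h1, h2, h3⟩ := zetaInvProfile_one_one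
  have hk := And.intro (hbound u hu 0) <| And.intro (hbound u hu 1) <|
    And.intro (hbound u hu 2) (hbound u hu 3)
  norm_num [h0, h1, h2, h3] at hk ⊢
  simpa only [mul_comm] using hk
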